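/- arXiv:2212.05151 — 2 statements merged into one kernel-verified Lean document; each statement's English description precedes it below -/
import Mathlib

section
/- Let θ ∈ [0,1], N ≥ 1, and let ψ be a stopping rule based on the sufficient statistic with ψ ∈ 𝒮^N. With b_n^m(s;θ) as defined by the backward recursion, the expected sample size satisfies E_θ τ_ψ = Σ_{n=1}^N n Σ_{x∈{0,1}^n} s_n^ψ(x) θ^{s_n(x)}(1−θ)^{n−s_n(x)} = 1 + Σ_{m=1}^{N−1} (b_1^m(0;θ) + b_1^m(1;θ)). (Equation (4-2).) -/
open scoped BigOperators

/-- binomial pmf `g_θ^n(s) = C(n,s) θ^s (1-θ)^{n-s}` -/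
noncomputable def binom (θ : ℝ) (n s : ℕ) : ℝ :=
  (n.choose s : ℝ) * θ ^ s * (1 - θ) ^ (n - s)

/-- `s_m(x)`: number of successes among the first `m` coordinates of `x ∈ {0,1}^n` -/
def prefixCount {n : ℕ} (x : Fin n → Bool) (m : ℕ) : ℕ :=
  (Finset.univ.filter fun i : Fin n => i.val < m ∧ x i).card

/-- `s_n^ψ(x) = (∏_{m=1}^{n-1} (1-ψ_m(s_m(x)))) · ψ_n(s_n(x))`, for a stopping rule `ψ`
based on the sufficient statistic -/
noncomputable def sstop (ψ : ℕ → ℕ → ℝ) (n : ℕ) (x : Fin n → Bool) : ℝ :=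
  (∏ m ∈ Finset.range (n - 1), (1 - ψ (m + 1) (prefixCount x (m + 1)))) *
    ψ n (prefixCount x n)

/-- `ψ ∈ 𝒮^N`: the stopping rule is truncated at `N`, i.e.
`∏_{n=1}^N (1-ψ_n(s_n(x))) = 0` for every `x ∈ {0,1}^N`. -/
def TruncatedAt (ψ : ℕ → ℕ → ℝ) (N : ℕ) : Prop :=
  ∀ x : Fin N → Bool, ∏ n ∈ Finset.range N, (1 - ψ (n + 1) (prefixCount x (n + 1))) = 0

/-- the backward recursion for non-stopping probabilities:
`b_m^m(s;θ) = g_θ^m(s)(1−ψ_m(s))` and, for `n < m`,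
`b_n^m(s;θ) = [b_{n+1}^m(s;θ)·(n+1−s)/(n+1) + b_{n+1}^m(s+1;θ)·(s+1)/(n+1)]·(1−ψ_n(s))`. -/
noncomputable def brec (θ : ℝ) (ψ : ℕ → ℕ → ℝ) (m : ℕ) : ℕ → ℕ → ℝ :=
  fun n s =>
    if _h : n < m then
      (brec θ ψ m (n + 1) s * ((n + 1 - s : ℕ) : ℝ) / (n + 1) +
          brec θ ψ m (n + 1) (s + 1) * ((s + 1 : ℕ) : ℝ) / (n + 1)) *
        (1 - ψ n s)
    else binom θ n s * (1 - ψ n s)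
  termination_by n _s => m - n

/-!
Let `Q_m = P_θ(τ > m)`. Summing out the last observation gives `P_θ(τ = m + 1) = Q_m - Q_{m+1}`,
so by summation by parts `E_θ τ = ∑_{n ≤ N} n (Q_{n-1} - Q_n) = ∑_{m < N} Q_m`, using `Q_N = 0`
(truncation) and `Q_0 = 1`. The identities `g^{n+1}(s)(n+1-s)/(n+1) = g^n(s)(1-θ)` and
`g^{n+1}(s+1)(s+1)/(n+1) = g^n(s) θ` turn the backward recursion into conditioning on the next
observation: `b_n^m(s) = g^n(s) · P_θ(no stop at times n, …, m | S_n = s)`. At `n = 1` this gives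
`Q_m = b_1^m(0) + b_1^m(1)`.
-/

open Finset

lemma Fin.sum_fun_succ_eq_sum_cons {α M : Type*} [Fintype α] [AddCommMonoid M] {d : ℕ}
    (f : (Fin (d + 1) → α) → M) :
    ∑ x, f x = ∑ y : Fin d → α, ∑ a, f (Fin.cons a y) := by
  rw [← (Fin.consEquiv fun _ => α).sum_comp, Fintype.sum_prod_type_right]
  rfl

lemma Fin.sum_fun_succ_eq_sum_snoc {α M : Type*} [Fintype α] [AddCommMonoid M] {d : ℕ}
    (f : (Fin (d + 1) → α) → M) :
    ∑ x, f x = ∑ y : Fin d → α, ∑ a, f (Fin.snoc y a) := by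
  rw [← (Fin.snocEquiv fun _ => α).sum_comp, Fintype.sum_prod_type_right]
  rfl

section PrefixCount

variable {n : ℕ}

lemma prefixCount_eq_sum (x : Fin n → Bool) (m : ℕ) :
    prefixCount x m = ∑ i : Fin n, if i.val < m ∧ x i then 1 else 0 :=
  card_filter _ _

lemma prefixCount_le (x : Fin n → Bool) : prefixCount x n ≤ n :=
  (card_le_univ _).trans_eq (Fintype.card_fin n)

@[simp]
lemma prefixCount_zero (x : Fin n → Bool) : prefixCount x 0 = 0 := by
  simp [prefixCount]

lemma prefixCount_cons_succ (b : Bool) (y : Fin n → Bool) (k : ℕ) :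
    prefixCount (Fin.cons b y : Fin (n + 1) → Bool) (k + 1) = b.toNat + prefixCount y k := by
  simp only [prefixCount_eq_sum, Fin.sum_univ_succ, Fin.cons_zero, Fin.cons_succ, Fin.val_zero,
    Fin.val_succ, Nat.add_lt_add_iff_right]
  cases b <;> simp

lemma prefixCount_snoc_of_le (x : Fin n → Bool) (b : Bool) {k : ℕ} (hk : k ≤ n) :
    prefixCount (Fin.snoc x b : Fin (n + 1) → Bool) k = prefixCount x k := by
  simp only [prefixCount_eq_sum, Fin.sum_univ_castSucc, Fin.snoc_castSucc, Fin.snoc_last,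
    Fin.val_castSucc, Fin.val_last]
  simp [hk.not_gt]

lemma prefixCount_snoc_succ (x : Fin n → Bool) (b : Bool) :
    prefixCount (Fin.snoc x b : Fin (n + 1) → Bool) (n + 1) = prefixCount x n + b.toNat := by
  simp only [prefixCount_eq_sum, Fin.sum_univ_castSucc, Fin.snoc_castSucc, Fin.snoc_last,
    Fin.val_castSucc, Fin.val_last, Nat.lt_succ_self, true_and]
  cases b <;> simp

end PrefixCount

lemma binom_succ_mul_sub_div (θ : ℝ) (n s : ℕ) :
    binom θ (n + 1) s * ((n + 1 - s : ℕ) : ℝ) / (n + 1) = binom θ n s * (1 - θ) := by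
  rw [div_eq_iff (by positivity)]
  rcases le_or_gt s n with hs | hs
  · have hchoose : ((n + 1).choose s : ℝ) * ((n + 1 - s : ℕ) : ℝ) = n.choose s * (n + 1) := by
      exact_mod_cast (Nat.choose_mul_succ_eq n s).symm
    rw [binom, binom, Nat.sub_add_comm hs, pow_succ] at *
    linear_combination (θ ^ s * (1 - θ) ^ (n - s) * (1 - θ)) * hchoose
  · simp [binom, Nat.choose_eq_zero_of_lt hs, Nat.sub_eq_zero_of_le hs]

lemma binom_succ_succ_mul_div (θ : ℝ) (n s : ℕ) :
    binom θ (n + 1) (s + 1) * ((s + 1 : ℕ) : ℝ) / (n + 1) = binom θ n s * θ := by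
  have hchoose : ((n + 1).choose (s + 1) : ℝ) * ((s + 1 : ℕ) : ℝ) = (n + 1) * n.choose s := by
    exact_mod_cast (Nat.add_one_mul_choose_eq n s).symm
  rw [div_eq_iff (by positivity), binom, binom, Nat.add_sub_add_right, pow_succ]
  linear_combination (θ ^ s * (1 - θ) ^ (n - s) * θ) * hchoose

noncomputable def pathProb (θ : ℝ) {n : ℕ} (x : Fin n → Bool) : ℝ :=
  θ ^ prefixCount x n * (1 - θ) ^ (n - prefixCount x n)

noncomputable def survivalWeight (ψ : ℕ → ℕ → ℝ) {n : ℕ} (x : Fin n → Bool) (m : ℕ) : ℝ :=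
  ∏ k ∈ range m, (1 - ψ (k + 1) (prefixCount x (k + 1)))

noncomputable def survivalProb (θ : ℝ) (ψ : ℕ → ℕ → ℝ) (m : ℕ) : ℝ :=
  ∑ x : Fin m → Bool, survivalWeight ψ x m * pathProb θ x

-- `P_θ(no stop at times n, …, n + d | S_n = s)`
noncomputable def condSurvivalProb (θ : ℝ) (ψ : ℕ → ℕ → ℝ) (d n s : ℕ) : ℝ :=
  ∑ y : Fin d → Bool, pathProb θ y * ∏ k ∈ range (d + 1), (1 - ψ (n + k) (s + prefixCount y k))

section PathProb

variable (θ : ℝ) {n : ℕ}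

lemma pathProb_cons (b : Bool) (y : Fin n → Bool) :
    pathProb θ (Fin.cons b y : Fin (n + 1) → Bool) = (if b then θ else 1 - θ) * pathProb θ y := by
  have := prefixCount_le y
  cases b <;>
    simp only [pathProb, prefixCount_cons_succ, Bool.toNat_false, Bool.toNat_true, zero_add,
      if_true, Bool.false_eq_true, if_false]
  · rw [Nat.sub_add_comm this, pow_succ]; ring
  · rw [add_comm 1, Nat.add_sub_add_right, pow_succ]; ring

lemma pathProb_snoc (x : Fin n → Bool) (b : Bool) :
    pathProb θ (Fin.snoc x b : Fin (n + 1) → Bool) = pathProb θ x * (if b then θ else 1 - θ) := by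
  have := prefixCount_le x
  cases b <;>
    simp only [pathProb, prefixCount_snoc_succ, Bool.toNat_false, Bool.toNat_true, add_zero,
      if_true, Bool.false_eq_true, if_false]
  · rw [Nat.sub_add_comm this, pow_succ]; ring
  · rw [Nat.add_sub_add_right, pow_succ]; ring

end PathProb

section Survival

variable (θ : ℝ) (ψ : ℕ → ℕ → ℝ)

@[simp]
lemma survivalProb_zero : survivalProb θ ψ 0 = 1 := by
  simp [survivalProb, survivalWeight, pathProb]

lemma survivalProb_eq_zero_of_truncatedAt {N : ℕ} (h : TruncatedAt ψ N) :
    survivalProb θ ψ N = 0 :=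
  sum_eq_zero fun x _ => by rw [survivalWeight, h x, zero_mul]

lemma survivalWeight_snoc {m : ℕ} (x : Fin m → Bool) (b : Bool) :
    survivalWeight ψ (Fin.snoc x b : Fin (m + 1) → Bool) m = survivalWeight ψ x m :=
  prod_congr rfl fun k hk => by
    rw [prefixCount_snoc_of_le x b (Nat.succ_le_of_lt (mem_range.mp hk))]

lemma sum_survivalWeight_mul_pathProb_succ (m : ℕ) :
    ∑ x : Fin (m + 1) → Bool, survivalWeight ψ x m * pathProb θ x = survivalProb θ ψ m := by
  rw [Fin.sum_fun_succ_eq_sum_snoc, survivalProb]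
  refine sum_congr rfl fun x _ => ?_
  simp only [Fintype.sum_bool, survivalWeight_snoc, pathProb_snoc, Bool.false_eq_true, if_false,
    if_true]
  ring

lemma sum_sstop_mul_pathProb (m : ℕ) :
    ∑ x : Fin (m + 1) → Bool, sstop ψ (m + 1) x * pathProb θ x =
      survivalProb θ ψ m - survivalProb θ ψ (m + 1) := by
  rw [← sum_survivalWeight_mul_pathProb_succ, survivalProb, ← sum_sub_distrib]
  refine sum_congr rfl fun x _ => ?_
  rw [sstop, Nat.add_sub_cancel, survivalWeight, survivalWeight, prod_range_succ]
  ring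

lemma condSurvivalProb_zero (n s : ℕ) : condSurvivalProb θ ψ 0 n s = 1 - ψ n s := by
  simp [condSurvivalProb, pathProb]

lemma condSurvivalProb_succ (d n s : ℕ) :
    condSurvivalProb θ ψ (d + 1) n s =
      ((1 - θ) * condSurvivalProb θ ψ d (n + 1) s + θ * condSurvivalProb θ ψ d (n + 1) (s + 1)) *
        (1 - ψ n s) := by
  simp only [condSurvivalProb, mul_sum, sum_mul, ← sum_add_distrib]
  rw [Fin.sum_fun_succ_eq_sum_cons]
  refine sum_congr rfl fun y _ => ?_
  simp only [Fintype.sum_bool, pathProb_cons, prod_range_succ', prefixCount_cons_succ,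
    prefixCount_zero, Bool.toNat_false, Bool.toNat_true, Bool.false_eq_true, if_false, if_true,
    add_zero, ← add_assoc, add_right_comm n _ 1]
  ring

lemma brec_add_eq_binom_mul_condSurvivalProb (d n s : ℕ) :
    brec θ ψ (n + d) n s = binom θ n s * condSurvivalProb θ ψ d n s := by
  induction d generalizing n s with
  | zero => rw [add_zero, brec, dif_neg (lt_irrefl n), condSurvivalProb_zero]
  | succ d ih =>
    rw [← add_assoc, add_right_comm, brec, dif_pos (by omega), ih, ih, condSurvivalProb_succ]
    linear_combination (1 - ψ n s) *
      (condSurvivalProb θ ψ d (n + 1) s * binom_succ_mul_sub_div θ n s +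
        condSurvivalProb θ ψ d (n + 1) (s + 1) * binom_succ_succ_mul_div θ n s)

lemma survivalProb_succ (d : ℕ) :
    survivalProb θ ψ (d + 1) =
      (1 - θ) * condSurvivalProb θ ψ d 1 0 + θ * condSurvivalProb θ ψ d 1 1 := by
  simp only [survivalProb, condSurvivalProb, mul_sum, ← sum_add_distrib]
  rw [Fin.sum_fun_succ_eq_sum_cons]
  refine sum_congr rfl fun y _ => ?_
  simp only [Fintype.sum_bool, survivalWeight, pathProb_cons, prefixCount_cons_succ,
    Bool.toNat_false, Bool.toNat_true, Bool.false_eq_true, if_false, if_true, zero_add]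
  simp only [add_comm 1]
  ring

lemma survivalProb_eq_brec {m : ℕ} (hm : 1 ≤ m) :
    survivalProb θ ψ m = brec θ ψ m 1 0 + brec θ ψ m 1 1 := by
  obtain ⟨d, rfl⟩ : ∃ d, m = 1 + d := ⟨m - 1, by omega⟩
  rw [brec_add_eq_binom_mul_condSurvivalProb, brec_add_eq_binom_mul_condSurvivalProb, add_comm,
    survivalProb_succ]
  simp [binom]

end Survival

lemma sum_Icc_mul_sub_eq {R : Type*} [CommRing R] (Q : ℕ → R) (N : ℕ) :
    ∑ n ∈ Icc 1 N, (n : R) * (Q (n - 1) - Q n) = ∑ m ∈ range N, Q m - N * Q N := by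
  induction N with
  | zero => simp
  | succ N ih =>
    rw [sum_Icc_succ_top (by omega), ih, sum_range_succ, Nat.add_sub_cancel]
    push_cast
    ring

theorem stmt4_general (θ : ℝ)
    (N : ℕ) (hN : 1 ≤ N)
    (ψ : ℕ → ℕ → ℝ)
    (htrunc : TruncatedAt ψ N) :
    ∑ n ∈ Finset.Icc 1 N, (n : ℝ) *
        ∑ x : Fin n → Bool,
          sstop ψ n x * (θ ^ prefixCount x n * (1 - θ) ^ (n - prefixCount x n)) =
      1 + ∑ m ∈ Finset.Icc 1 (N - 1), (brec θ ψ m 1 0 + brec θ ψ m 1 1) := by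
  change ∑ n ∈ Icc 1 N, (n : ℝ) * ∑ x : Fin n → Bool, sstop ψ n x * pathProb θ x = _
  have hsummand : ∀ n ∈ Icc 1 N, (n : ℝ) * ∑ x : Fin n → Bool, sstop ψ n x * pathProb θ x =
      n * (survivalProb θ ψ (n - 1) - survivalProb θ ψ n) := by
    intro n hn
    obtain ⟨m, rfl⟩ : ∃ m, n = m + 1 := ⟨n - 1, by grind⟩
    rw [sum_sstop_mul_pathProb, Nat.add_sub_cancel]
  obtain ⟨K, rfl⟩ : ∃ K, N = K + 1 := ⟨N - 1, by omega⟩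
  rw [sum_congr rfl hsummand, sum_Icc_mul_sub_eq, survivalProb_eq_zero_of_truncatedAt θ ψ htrunc,
    mul_zero, sub_zero, sum_range_succ', survivalProb_zero, add_comm, Nat.add_sub_cancel,
    ← Ico_add_one_right_eq_Icc, sum_Ico_eq_sum_range, Nat.add_sub_cancel]
  exact congrArg _ <| sum_congr rfl fun m _ => add_comm 1 m ▸ survivalProb_eq_brec θ ψ (by omega)

/-- **Equation (4-2)**: for a stopping rule `ψ ∈ 𝒮^N` based on the sufficient
statistic, the expected sample size satisfies
`E_θ τ_ψ = Σ_{n=1}^N n Σ_{x∈{0,1}^n} s_n^ψ(x) θ^{s_n(x)}(1−θ)^{n−s_n(x)}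
  = 1 + Σ_{m=1}^{N−1} (b_1^m(0;θ) + b_1^m(1;θ))`. -/
theorem stmt4 (θ : ℝ) (hθ : θ ∈ Set.Icc (0 : ℝ) 1)
    (N : ℕ) (hN : 1 ≤ N)
    (ψ : ℕ → ℕ → ℝ) (hψ : ∀ n s, ψ n s ∈ Set.Icc (0 : ℝ) 1)
    (htrunc : TruncatedAt ψ N) :
    ∑ n ∈ Finset.Icc 1 N, (n : ℝ) *
        ∑ x : Fin n → Bool,
          sstop ψ n x * (θ ^ prefixCount x n * (1 - θ) ^ (n - prefixCount x n)) =
      1 + ∑ m ∈ Finset.Icc 1 (N - 1), (brec θ ψ m 1 0 + brec θ ψ m 1 1) :=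
  stmt4_general θ N hN ψ htrunc
end

section
/- (Truncated lower bound, Bernoulli instance of inequality (2-5).) For every sequential test ⟨ψ,φ⟩ based on the sufficient statistic with ψ ∈ 𝒮^N, the Lagrangian satisfies L(ψ,φ) := Σ_{n=1}^N Σ_{x∈{0,1}^n} s_n^ψ(x) [ n·f_{γϑ}^n(x) + Σ_{j=1}^k φ_n^j(s_n(x)) Σ_{i≠j} λ_{ij} f_{θ_i}^n(x) ] ≥ 1 + U_1^N(0) + U_1^N(1). -/
open scoped BigOperators

/-- number of successes in the sample `x` -/
def count {n : ℕ} (x : Fin n → Bool) : ℕ := (Finset.univ.filter fun i => x i).card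

/-- joint Bernoulli density `f_θ^n(x) = θ^{s_n(x)} (1-θ)^{n-s_n(x)}` -/
noncomputable def fpow (θ : ℝ) (n : ℕ) (x : Fin n → Bool) : ℝ :=
  θ ^ count x * (1 - θ) ^ (n - count x)

/-- `u_n(s) = min_{1≤j≤k} Σ_{i≠j} λ_{ij} g_{θ_i}^n(s)` -/
noncomputable def ufun (k : ℕ) (θs : Fin k → ℝ) (lam : Fin k → Fin k → ℝ)
    (n s : ℕ) : ℝ :=
  ⨅ j : Fin k, ∑ i ∈ Finset.univ.filter (· ≠ j), lam i j * binom (θs i) n s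

/-- `f_{γϑ}^n(x) = Σ_i γ_i f_{ϑ_i}^n(x)` -/
noncomputable def fmix (K : ℕ) (γ ϑ : Fin K → ℝ) (n : ℕ) (x : Fin n → Bool) : ℝ :=
  ∑ i, γ i * fpow (ϑ i) n x

/-- `g_{γϑ}^n(s) = Σ_i γ_i g_{ϑ_i}^n(s)` -/
noncomputable def gmix (K : ℕ) (γ ϑ : Fin K → ℝ) (n s : ℕ) : ℝ :=
  ∑ i, γ i * binom (ϑ i) n s

/-- the backward recursion `U_n^N`: `U_N^N = u_N` and
`U_{n}^N(s) = min{u_{n}(s), g_{γϑ}^{n}(s) + (𝒥_{n+1} U_{n+1}^N)(s)}` for `n < N`, where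
`(𝒥_{n+1} U)(s) = U(s)·(n+1-s)/(n+1) + U(s+1)·(s+1)/(n+1)`. -/
noncomputable def U (k : ℕ) (θs : Fin k → ℝ) (lam : Fin k → Fin k → ℝ)
    (K : ℕ) (γ ϑ : Fin K → ℝ) (N : ℕ) : ℕ → ℕ → ℝ :=
  fun n s =>
    if _h : n < N then
      min (ufun k θs lam n s)
        (gmix K γ ϑ n s +
          (U k θs lam K γ ϑ N (n + 1) s * ((n + 1 - s : ℕ) : ℝ) / (n + 1) +
            U k θs lam K γ ϑ N (n + 1) (s + 1) * ((s + 1 : ℕ) : ℝ) / (n + 1)))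
    else ufun k θs lam n s
  termination_by n _s => N - n

/-- the Lagrangian of a truncated test `⟨ψ,φ⟩` based on the sufficient statistic:
`L(ψ,φ) = Σ_{n=1}^N Σ_{x∈{0,1}^n} s_n^ψ(x)
  [ n·f_{γϑ}^n(x) + Σ_{j=1}^k φ_n^j(s_n(x)) Σ_{i≠j} λ_{ij} f_{θ_i}^n(x) ]`. -/
noncomputable def Lagr (k : ℕ) (θs : Fin k → ℝ) (lam : Fin k → Fin k → ℝ)
    (K : ℕ) (γ ϑ : Fin K → ℝ) (N : ℕ)
    (ψ : ℕ → ℕ → ℝ) (φ : ℕ → ℕ → Fin k → ℝ) : ℝ :=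
  ∑ n ∈ Finset.Icc 1 N, ∑ x : Fin n → Bool,
    sstop ψ n x *
      ((n : ℝ) * fmix K γ ϑ n x +
        ∑ j : Fin k, φ n (prefixCount x n) j *
          ∑ i ∈ Finset.univ.filter (· ≠ j), lam i j * fpow (θs i) n x)

/-!
Dividing `U_n^N(s)` by `C(n,s)` gives a function `W_n` of the sample itself: the weights
`(n+1-s)/(n+1)` and `(s+1)/(n+1)` of `𝒥_{n+1}` are exactly what turn `C(n,s)` into `C(n+1,s)` and
`C(n+1,s+1)`. So `W_n(x) ≤ min_j Σ_{i≠j} λ_{ij} f_{θ_i}^n(x)` and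
`W_n(x) ≤ f_{γϑ}^n(x) + W_{n+1}(x0) + W_{n+1}(x1)`. Write `p_n(x)` for the weight of not having
stopped before stage `n`. At stage `n` this weight splits into stopping, which costs
`n·f_{γϑ}^n + Σ_j φ_n^j (…) ≥ n·f_{γϑ}^n + W_n`, and continuing, which passes
`n·f_{γϑ}^n + W_n ≤ (n+1)·(f_{γϑ}^{n+1}(x0) + f_{γϑ}^{n+1}(x1)) + W_{n+1}(x0) + W_{n+1}(x1)`
on to stage `n+1`. Backward induction from the truncation level, where nothing continues, gives
`Σ_x p_n(x) (n·f_{γϑ}^n(x) + W_n(x)) ≤ Σ_{m=n}^N (…)`; at `n = 1` the left side is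
`f_{γϑ}^0 + U_1^N(0) + U_1^N(1) = 1 + U_1^N(0) + U_1^N(1)`.
-/

open Finset

lemma count_le {n : ℕ} (x : Fin n → Bool) : count x ≤ n := by
  simpa [count] using card_filter_le univ fun i => x i = true

lemma count_snoc {n : ℕ} (x : Fin n → Bool) (b : Bool) :
    count (Fin.snoc x b : Fin (n + 1) → Bool) = count x + if b then 1 else 0 := by
  simp only [count, card_filter]
  rw [Fin.sum_univ_castSucc]
  simp [Fin.snoc_castSucc, Fin.snoc_last]

lemma prefixCount_snoc {n m : ℕ} (x : Fin n → Bool) (b : Bool) (hm : m ≤ n) :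
    prefixCount (Fin.snoc x b : Fin (n + 1) → Bool) m = prefixCount x m := by
  simp only [prefixCount, card_filter, Fin.sum_univ_castSucc, Fin.snoc_castSucc,
    Fin.val_castSucc, Fin.snoc_last, Fin.val_last]
  simp [show ¬ n < m by omega]

lemma prefixCount_self {n : ℕ} (x : Fin n → Bool) : prefixCount x n = count x := by
  simp [prefixCount, count]

lemma count_fin_zero (x : Fin 0 → Bool) : count x = 0 := by
  simp [count]

lemma sum_boolTuple_succ {n : ℕ} (F : (Fin (n + 1) → Bool) → ℝ) :
    ∑ y, F y = ∑ x : Fin n → Bool, (F (Fin.snoc x false) + F (Fin.snoc x true)) := by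
  rw [← (Fin.snocEquiv fun _ => Bool).sum_comp F, Fintype.sum_prod_type, Fintype.sum_bool,
    ← sum_add_distrib]
  simp [Fin.snocEquiv, add_comm]

lemma fpow_snoc_false (θ : ℝ) {n : ℕ} (x : Fin n → Bool) :
    fpow θ (n + 1) (Fin.snoc x false) = (1 - θ) * fpow θ n x := by
  rw [fpow, fpow, count_snoc, if_neg Bool.false_ne_true, add_zero,
    Nat.sub_add_comm (count_le x), pow_succ]
  ring

lemma fpow_snoc_true (θ : ℝ) {n : ℕ} (x : Fin n → Bool) :
    fpow θ (n + 1) (Fin.snoc x true) = θ * fpow θ n x := by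
  rw [fpow, fpow, count_snoc, if_pos rfl, Nat.add_sub_add_right, pow_succ]
  ring

lemma fmix_snoc_false_add_snoc_true (K : ℕ) (γ ϑ : Fin K → ℝ) {n : ℕ} (x : Fin n → Bool) :
    fmix K γ ϑ (n + 1) (Fin.snoc x false) + fmix K γ ϑ (n + 1) (Fin.snoc x true) =
      fmix K γ ϑ n x := by
  simp only [fmix, ← sum_add_distrib, fpow_snoc_false, fpow_snoc_true]
  exact sum_congr rfl fun i _ => by ring

lemma fmix_zero {K : ℕ} {γ : Fin K → ℝ} (hγ1 : ∑ i, γ i = 1) (ϑ : Fin K → ℝ)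
    (x : Fin 0 → Bool) : fmix K γ ϑ 0 x = 1 := by
  simp [fmix, fpow, count_fin_zero, hγ1]

lemma binom_count (θ : ℝ) {n : ℕ} (x : Fin n → Bool) :
    binom θ n (count x) = n.choose (count x) * fpow θ n x := by
  rw [binom, fpow, mul_assoc]

lemma gmix_count (K : ℕ) (γ ϑ : Fin K → ℝ) {n : ℕ} (x : Fin n → Bool) :
    gmix K γ ϑ n (count x) = n.choose (count x) * fmix K γ ϑ n x := by
  simp only [gmix, fmix, binom_count, mul_sum]
  exact sum_congr rfl fun i _ => by ring

section Decisions

variable (k : ℕ) (θs : Fin k → ℝ) (lam : Fin k → Fin k → ℝ)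

noncomputable def minLoss (n : ℕ) (x : Fin n → Bool) : ℝ :=
  ⨅ j : Fin k, ∑ i ∈ univ.filter (· ≠ j), lam i j * fpow (θs i) n x

noncomputable def decisionLoss (φ : ℕ → ℕ → Fin k → ℝ) (n : ℕ) (x : Fin n → Bool) : ℝ :=
  ∑ j : Fin k, φ n (prefixCount x n) j *
    ∑ i ∈ univ.filter (· ≠ j), lam i j * fpow (θs i) n x

lemma ufun_count {n : ℕ} (x : Fin n → Bool) :
    ufun k θs lam n (count x) = n.choose (count x) * minLoss k θs lam n x := by
  simp only [ufun, minLoss, Real.mul_iInf_of_nonneg (Nat.cast_nonneg _), mul_sum, binom_count]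
  exact iInf_congr fun j => sum_congr rfl fun i _ => by ring

lemma ciInf_le_sum_mul {ι : Type*} [Fintype ι] (f w : ι → ℝ) (hw : ∀ i, 0 ≤ w i)
    (hw1 : ∑ i, w i = 1) : ⨅ i, f i ≤ ∑ i, w i * f i :=
  calc ⨅ i, f i = ∑ i, w i * ⨅ i, f i := by rw [← sum_mul, hw1, one_mul]
    _ ≤ ∑ i, w i * f i := sum_le_sum fun i _ =>
      mul_le_mul_of_nonneg_left (ciInf_le (Set.finite_range f).bddBelow i) (hw i)

lemma minLoss_le_decisionLoss {φ : ℕ → ℕ → Fin k → ℝ} (hφ : ∀ n s j, 0 ≤ φ n s j)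
    (hφsum : ∀ n s, ∑ j, φ n s j = 1) (n : ℕ) (x : Fin n → Bool) :
    minLoss k θs lam n x ≤ decisionLoss k θs lam φ n x :=
  ciInf_le_sum_mul _ _ (hφ n _) (hφsum n _)

end Decisions

section SampleValue

lemma mul_succ_sub_div_succ_div_choose {n s : ℕ} (hs : s ≤ n) (a : ℝ) :
    a * ((n + 1 - s : ℕ) : ℝ) / (n + 1) / n.choose s = a / (n + 1).choose s := by
  have hchoose : (n.choose s : ℝ) * (n + 1) = (n + 1).choose s * ((n + 1 - s : ℕ) : ℝ) := by
    exact_mod_cast Nat.choose_mul_succ_eq n s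
  have : (0 : ℝ) < n.choose s := by exact_mod_cast Nat.choose_pos hs
  have : (0 : ℝ) < (n + 1).choose s := by exact_mod_cast Nat.choose_pos (by omega)
  rw [div_div, div_eq_div_iff (by positivity) (by positivity)]
  linear_combination (-a) * hchoose

lemma mul_succ_div_succ_div_choose {n s : ℕ} (hs : s ≤ n) (a : ℝ) :
    a * ((s + 1 : ℕ) : ℝ) / (n + 1) / n.choose s = a / (n + 1).choose (s + 1) := by
  have hchoose : ((n : ℝ) + 1) * n.choose s = (n + 1).choose (s + 1) * ((s : ℝ) + 1) := by
    exact_mod_cast Nat.add_one_mul_choose_eq n s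
  have : (0 : ℝ) < n.choose s := by exact_mod_cast Nat.choose_pos hs
  have : (0 : ℝ) < (n + 1).choose (s + 1) := by exact_mod_cast Nat.choose_pos (by omega)
  rw [div_div, div_eq_div_iff (by positivity) (by positivity)]
  push_cast
  linear_combination (-a) * hchoose

variable (k : ℕ) (θs : Fin k → ℝ) (lam : Fin k → Fin k → ℝ) (K : ℕ) (γ ϑ : Fin K → ℝ) (N : ℕ)

noncomputable def sampleValue (n : ℕ) (x : Fin n → Bool) : ℝ :=
  U k θs lam K γ ϑ N n (count x) / n.choose (count x)

lemma sampleValue_of_le {n : ℕ} (hn : N ≤ n) (x : Fin n → Bool) :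
    sampleValue k θs lam K γ ϑ N n x = minLoss k θs lam n x := by
  have : (n.choose (count x) : ℝ) ≠ 0 := by exact_mod_cast (Nat.choose_pos (count_le x)).ne'
  rw [sampleValue, U, dif_neg hn.not_gt, ufun_count, mul_div_cancel_left₀ _ this]

lemma sampleValue_of_lt {n : ℕ} (hn : n < N) (x : Fin n → Bool) :
    sampleValue k θs lam K γ ϑ N n x =
      min (minLoss k θs lam n x)
        (fmix K γ ϑ n x + (sampleValue k θs lam K γ ϑ N (n + 1) (Fin.snoc x false) +
          sampleValue k θs lam K γ ϑ N (n + 1) (Fin.snoc x true))) := by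
  have hpos : (0 : ℝ) < n.choose (count x) := by exact_mod_cast Nat.choose_pos (count_le x)
  rw [sampleValue, U, dif_pos hn, ← min_div_div_right hpos.le, ufun_count, gmix_count,
    add_div, add_div, mul_succ_sub_div_succ_div_choose (count_le x),
    mul_succ_div_succ_div_choose (count_le x), sampleValue, sampleValue, count_snoc, count_snoc]
  simp [hpos.ne']

lemma sampleValue_le_minLoss (n : ℕ) (x : Fin n → Bool) :
    sampleValue k θs lam K γ ϑ N n x ≤ minLoss k θs lam n x := by
  rcases lt_or_ge n N with hn | hn
  · exact (sampleValue_of_lt k θs lam K γ ϑ N hn x).trans_le (min_le_left _ _)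
  · exact (sampleValue_of_le k θs lam K γ ϑ N hn x).le

end SampleValue

section Stopping

variable (ψ : ℕ → ℕ → ℝ)

noncomputable def notStopped (n : ℕ) (x : Fin n → Bool) : ℝ :=
  ∏ m ∈ range (n - 1), (1 - ψ (m + 1) (prefixCount x (m + 1)))

lemma sstop_eq_notStopped_mul (n : ℕ) (x : Fin n → Bool) :
    sstop ψ n x = notStopped ψ n x * ψ n (count x) := by
  rw [sstop, notStopped, prefixCount_self]

lemma notStopped_one (x : Fin 1 → Bool) : notStopped ψ 1 x = 1 := by
  simp [notStopped]

lemma notStopped_snoc {n : ℕ} (hn : 1 ≤ n) (x : Fin n → Bool) (b : Bool) :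
    notStopped ψ (n + 1) (Fin.snoc x b) = notStopped ψ n x * (1 - ψ n (count x)) := by
  obtain ⟨n, rfl⟩ := Nat.exists_eq_add_of_le' hn
  rw [notStopped, notStopped, Nat.add_sub_cancel, prod_range_succ, Nat.add_sub_cancel,
    prefixCount_snoc x b le_rfl, prefixCount_self]
  congr 1
  exact prod_congr rfl fun m hm => by
    rw [prefixCount_snoc x b (by simp only [mem_range] at hm; omega)]

variable {ψ}

lemma notStopped_nonneg (hψ : ∀ n s, ψ n s ≤ 1) (n : ℕ) (x : Fin n → Bool) :
    0 ≤ notStopped ψ n x :=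
  prod_nonneg fun _ _ => sub_nonneg.2 (hψ _ _)

lemma TruncatedAt.notStopped_eq_sstop {N : ℕ} (htrunc : TruncatedAt ψ N) (hN : 1 ≤ N)
    (x : Fin N → Bool) : notStopped ψ N x = sstop ψ N x := by
  obtain ⟨N, rfl⟩ := Nat.exists_eq_add_of_le' hN
  have hstop := htrunc x
  rw [prod_range_succ, prefixCount_self] at hstop
  rw [sstop_eq_notStopped_mul, notStopped, Nat.add_sub_cancel]
  linear_combination hstop

end Stopping

section BackwardInduction

variable (ψ : ℕ → ℕ → ℝ) (N : ℕ) (c W D : (n : ℕ) → (Fin n → Bool) → ℝ)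

noncomputable def runningValue (n : ℕ) : ℝ :=
  ∑ x : Fin n → Bool, notStopped ψ n x * (n * c n x + W n x)

noncomputable def lagrangianFrom (n : ℕ) : ℝ :=
  ∑ m ∈ Icc n N, ∑ x : Fin m → Bool, sstop ψ m x * (m * c m x + D m x)

variable {ψ N c W D}

lemma notStopped_mul_le {n : ℕ} (hψ : ∀ n s, ψ n s ∈ Set.Icc (0 : ℝ) 1) (hn : 1 ≤ n)
    (x : Fin n → Bool) (hWD : W n x ≤ D n x)
    (hstep : W n x ≤ c n x + (W (n + 1) (Fin.snoc x false) + W (n + 1) (Fin.snoc x true)))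
    (hc : c (n + 1) (Fin.snoc x false) + c (n + 1) (Fin.snoc x true) = c n x) :
    notStopped ψ n x * (n * c n x + W n x) ≤
      sstop ψ n x * (n * c n x + D n x) +
        (notStopped ψ (n + 1) (Fin.snoc x false) *
            ((n + 1 : ℕ) * c (n + 1) (Fin.snoc x false) + W (n + 1) (Fin.snoc x false)) +
          notStopped ψ (n + 1) (Fin.snoc x true) *
            ((n + 1 : ℕ) * c (n + 1) (Fin.snoc x true) + W (n + 1) (Fin.snoc x true))) := by
  rw [sstop_eq_notStopped_mul, notStopped_snoc ψ hn, notStopped_snoc ψ hn]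
  have hp := notStopped_nonneg (fun n s => (hψ n s).2) n x
  obtain ⟨hq0, hq1⟩ := hψ n (count x)
  have hstop := mul_le_mul_of_nonneg_left (add_le_add_left hWD (n * c n x)) (mul_nonneg hp hq0)
  have hgo := mul_le_mul_of_nonneg_left (add_le_add_left hstep (n * c n x))
    (mul_nonneg hp (sub_nonneg.2 hq1))
  push_cast
  linear_combination hstop + hgo - notStopped ψ n x * (1 - ψ n (count x)) * (n + 1) * hc

lemma runningValue_le_add {n : ℕ} (hψ : ∀ n s, ψ n s ∈ Set.Icc (0 : ℝ) 1) (hn : 1 ≤ n)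
    (hWD : ∀ x, W n x ≤ D n x)
    (hstep : ∀ x, W n x ≤ c n x + (W (n + 1) (Fin.snoc x false) + W (n + 1) (Fin.snoc x true)))
    (hc : ∀ x, c (n + 1) (Fin.snoc x false) + c (n + 1) (Fin.snoc x true) = c n x) :
    runningValue ψ c W n ≤
      ∑ x : Fin n → Bool, sstop ψ n x * (n * c n x + D n x) + runningValue ψ c W (n + 1) := by
  rw [runningValue, runningValue, sum_boolTuple_succ, ← sum_add_distrib]
  exact sum_le_sum fun x _ => notStopped_mul_le hψ hn x (hWD x) (hstep x) (hc x)

theorem runningValue_le_lagrangianFrom (hψ : ∀ n s, ψ n s ∈ Set.Icc (0 : ℝ) 1)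
    (htrunc : TruncatedAt ψ N) (hWD : ∀ n x, W n x ≤ D n x)
    (hstep : ∀ n < N, ∀ x,
      W n x ≤ c n x + (W (n + 1) (Fin.snoc x false) + W (n + 1) (Fin.snoc x true)))
    (hc : ∀ n x, c (n + 1) (Fin.snoc x false) + c (n + 1) (Fin.snoc x true) = c n x)
    {n : ℕ} (hn : 1 ≤ n) (hnN : n ≤ N) :
    runningValue ψ c W n ≤ lagrangianFrom ψ N c D n := by
  induction hnN using Nat.decreasingInduction with
  | self =>
    rw [runningValue, lagrangianFrom, Icc_self, sum_singleton]
    exact sum_le_sum fun x _ => by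
      rw [← htrunc.notStopped_eq_sstop hn]
      gcongr
      · exact notStopped_nonneg (fun n s => (hψ n s).2) N x
      · exact hWD N x
  | of_succ m hm ih =>
    rw [lagrangianFrom, ← insert_Icc_add_one_left_eq_Icc hm.le, sum_insert (by simp)]
    exact (runningValue_le_add hψ hn (hWD m) (hstep m hm) (hc m)).trans
      (add_le_add le_rfl (ih (by omega)))

end BackwardInduction

lemma runningValue_one {K : ℕ} {γ : Fin K → ℝ} (hγ1 : ∑ i, γ i = 1) (ϑ : Fin K → ℝ)
    (ψ : ℕ → ℕ → ℝ) (W : (n : ℕ) → (Fin n → Bool) → ℝ) :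
    runningValue ψ (fmix K γ ϑ) W 1 =
      1 + W 1 (Fin.snoc default false) + W 1 (Fin.snoc default true) := by
  rw [runningValue, sum_boolTuple_succ, Fintype.sum_subsingleton _ default]
  have hsplit := fmix_snoc_false_add_snoc_true K γ ϑ (default : Fin 0 → Bool)
  dsimp only [Nat.reduceAdd] at hsplit
  simp only [notStopped_one, Nat.cast_one, one_mul]
  linear_combination hsplit + fmix_zero hγ1 ϑ default

theorem stmt14_general (k : ℕ) (θs : Fin k → ℝ)
    (lam : Fin k → Fin k → ℝ)
    (K : ℕ) (γ ϑ : Fin K → ℝ)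
    (hγ1 : ∑ i, γ i = 1)
    (N : ℕ) (hN : 2 ≤ N)
    (ψ : ℕ → ℕ → ℝ) (hψ : ∀ n s, ψ n s ∈ Set.Icc (0 : ℝ) 1)
    (φ : ℕ → ℕ → Fin k → ℝ) (hφ : ∀ n s j, φ n s j ∈ Set.Icc (0 : ℝ) 1)
    (hφsum : ∀ n s, ∑ j, φ n s j = 1)
    (htrunc : TruncatedAt ψ N) :
    1 + U k θs lam K γ ϑ N 1 0 + U k θs lam K γ ϑ N 1 1 ≤
      Lagr k θs lam K γ ϑ N ψ φ := by
  have hbound := runningValue_le_lagrangianFrom (c := fmix K γ ϑ)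
    (W := sampleValue k θs lam K γ ϑ N) (D := decisionLoss k θs lam φ) hψ htrunc
    (fun n x => (sampleValue_le_minLoss k θs lam K γ ϑ N n x).trans
      (minLoss_le_decisionLoss k θs lam (fun n s j => (hφ n s j).1) hφsum n x))
    (fun n hn x => (sampleValue_of_lt k θs lam K γ ϑ N hn x).trans_le (min_le_right _ _))
    (fun n x => fmix_snoc_false_add_snoc_true K γ ϑ x) le_rfl (by omega)
  have hfalse : sampleValue k θs lam K γ ϑ N 1 (Fin.snoc default false) =
      U k θs lam K γ ϑ N 1 0 := by
    rw [sampleValue, count_snoc, count_fin_zero]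
    simp
  have htrue : sampleValue k θs lam K γ ϑ N 1 (Fin.snoc default true) =
      U k θs lam K γ ϑ N 1 1 := by
    rw [sampleValue, count_snoc, count_fin_zero]
    simp
  rwa [runningValue_one hγ1, hfalse, htrue] at hbound

/-- **Truncated lower bound (Bernoulli instance of inequality (2-5))**: for every
sequential test `⟨ψ,φ⟩` based on the sufficient statistic with `ψ ∈ 𝒮^N`,
`L(ψ,φ) ≥ 1 + U_1^N(0) + U_1^N(1)`. -/
theorem stmt14 (k : ℕ) (hk : 2 ≤ k) (θs : Fin k → ℝ)
    (hθ : ∀ i, θs i ∈ Set.Icc (0 : ℝ) 1)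
    (lam : Fin k → Fin k → ℝ) (hlam : ∀ i j, 0 ≤ lam i j)
    (K : ℕ) (hK : 1 ≤ K) (γ ϑ : Fin K → ℝ)
    (hγ : ∀ i, 0 ≤ γ i) (hγ1 : ∑ i, γ i = 1)
    (hϑ : ∀ i, ϑ i ∈ Set.Icc (0 : ℝ) 1)
    (N : ℕ) (hN : 2 ≤ N)
    (ψ : ℕ → ℕ → ℝ) (hψ : ∀ n s, ψ n s ∈ Set.Icc (0 : ℝ) 1)
    (φ : ℕ → ℕ → Fin k → ℝ) (hφ : ∀ n s j, φ n s j ∈ Set.Icc (0 : ℝ) 1)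
    (hφsum : ∀ n s, ∑ j, φ n s j = 1)
    (htrunc : TruncatedAt ψ N) :
    1 + U k θs lam K γ ϑ N 1 0 + U k θs lam K γ ϑ N 1 1 ≤
      Lagr k θs lam K γ ϑ N ψ φ :=
  stmt14_general k θs lam K γ ϑ hγ1 N hN ψ hψ φ hφ hφsum htrunc
end
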